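/- arXiv:1605.01031 — 2 statements merged into one kernel-verified Lean document; each statement's English description precedes it below -/
import Mathlib

section
/- Let A be a real m × n matrix with m < n, let b ∈ ℝ^m, and let x* ∈ ℝ^n be a vector satisfying A x* = b with support I = supp(x*) ⊆ {1,…,n}. Then x* is the unique solution of the L1-minimization problem min ‖x‖₁ subject to A x = b if and only if the following two conditions both hold: (i) the submatrix A_I formed by the columns of A indexed by I has trivial kernel, i.e. ker(A_I) = {0}; and (ii) there exists ω ∈ ℝ^m such that A_Iᵀ ω = sign(x*)_I and ‖A_{Iᶜ}ᵀ ω‖_∞ < 1, where sign(x*)_I is the vector of signs of the entries of x* on I and A_{Iᶜ} is the submatrix of columns of A indexed by the complement of I. -/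
/-!
Sufficiency is weak duality: a certificate `ω` gives
`‖x‖₁ ≥ ⟪Aᵀω, x⟫ = ⟪Aᵀω, x*⟫ = ‖x*‖₁` for every `x` with `A x = b`, strictly as soon as `x` has a
nonzero entry off `I`, while feasible `x` supported on `I` equal `x*` because `A_I` is injective.

For necessity, moving from `x*` along `v ∈ ker A` changes `‖·‖₁` to first order by the one-sided
directional derivative `l1DirDeriv x* v`, which uniqueness forces to be positive for `v ≠ 0`;
applied to `±v` with `supp v ⊆ I` this gives injectivity of `A_I`. If there were no strict
certificate, Hahn–Banach would separate the open box `{y | |y_i| < 1 off I}` from the affine set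
of exact certificates `{Aᵀω | (Aᵀω)_I = sign(x*)_I}` (non-empty because `A_I` is injective). The
separating vector `g` annihilates the directions `range Aᵀ ∩ {y | y_I = 0}` of that affine set,
so `g - c ∈ ker A` for some `c` supported on `I`, and `g - c` is a nonzero vector of `ker A`
whose directional derivative is at most `‖g‖₁ - ⟪sign x*, c⟫ ≤ 0`.
-/

open Matrix Finset Filter Topology Function

namespace Real

theorem sign_mul_self_eq_abs (x : ℝ) : sign x * x = |x| := by
  rcases lt_trichotomy x 0 with h | rfl | h
  · rw [sign_of_neg h, abs_of_neg h]; ring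
  · simp
  · rw [sign_of_pos h, abs_of_pos h]; ring

theorem abs_sign_le_one (x : ℝ) : |sign x| ≤ 1 := by
  rcases sign_apply_eq x with h | h | h <;> simp [h]

theorem abs_add_eq_of_abs_le {a e : ℝ} (ha : a ≠ 0) (he : |e| ≤ |a|) :
    |a + e| = |a| + sign a * e := by
  obtain ⟨he₁, he₂⟩ := abs_le.1 he
  rcases ha.lt_or_gt with h | h
  · rw [abs_of_neg h] at he₁ he₂
    rw [sign_of_neg h, abs_of_neg h, abs_of_nonpos (by linarith)]; ring
  · rw [abs_of_pos h] at he₁ he₂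
    rw [sign_of_pos h, abs_of_pos h, abs_of_nonneg (by linarith)]; ring

end Real

theorem eq_zero_of_forall_mul_le {b c : ℝ} (h : ∀ t : ℝ, t * b ≤ c) : b = 0 := by
  by_contra hb
  have := h ((c + 1) / b)
  rw [div_mul_cancel₀ _ hb] at this
  linarith

variable {ι κ : Type*} [Fintype ι]

namespace Matrix

variable {K : Type*} [Field K]

theorem exists_vecMul_eq_of_forall_mulVec_eq_zero [Fintype κ] (M : Matrix κ ι K) {y : ι → K}
    (h : ∀ v, M *ᵥ v = 0 → y ⬝ᵥ v = 0) : ∃ ω, ω ᵥ* M = y := by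
  classical
  have hy : dotProductEquiv K ι y ∈ (LinearMap.ker M.mulVecLin).dualAnnihilator :=
    (Submodule.mem_dualAnnihilator _).2 fun v hv => h v hv
  rw [← LinearMap.range_dualMap_eq_dualAnnihilator_ker] at hy
  obtain ⟨ψ, hψ⟩ := hy
  obtain ⟨ω, rfl⟩ := (dotProductEquiv K κ).surjective ψ
  refine ⟨ω, (dotProductEquiv K ι).injective (LinearMap.ext fun v => ?_)⟩
  simpa [dotProduct_mulVec] using LinearMap.congr_fun hψ v

/- `A * diagonal (S.indicator 1)` stands for the column submatrix `A_S`, padded with zero columns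
so that it keeps the index type `ι`. -/
section ColumnMask

variable [DecidableEq ι] (S : Set ι)

theorem mul_diagonal_indicator_mulVec (A : Matrix κ ι K) (v : ι → K) :
    (A * diagonal (S.indicator (1 : ι → K))) *ᵥ v = A *ᵥ S.indicator v := by
  rw [← mulVec_mulVec]
  congr 1
  ext i
  by_cases hi : i ∈ S <;> simp [mulVec_diagonal, hi]

theorem vecMul_mul_diagonal_indicator [Fintype κ] (A : Matrix κ ι K) (ω : κ → K) :
    ω ᵥ* (A * diagonal (S.indicator (1 : ι → K))) = S.indicator (ω ᵥ* A) := by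
  rw [← vecMul_vecMul]
  ext i
  by_cases hi : i ∈ S <;> simp [vecMul_diagonal, hi]

end ColumnMask

variable [Fintype κ] {A : Matrix κ ι K} {S : Set ι}

theorem exists_transpose_mulVec_eq_on (hA : ∀ v, (∀ i ∉ S, v i = 0) → A *ᵥ v = 0 → v = 0)
    (s : ι → K) : ∃ ω, ∀ i ∈ S, (Aᵀ *ᵥ ω) i = s i := by
  classical
  obtain ⟨ω, hω⟩ := exists_vecMul_eq_of_forall_mulVec_eq_zero
    (A * diagonal (S.indicator (1 : ι → K))) (y := S.indicator s) fun v hv => by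
      rw [mul_diagonal_indicator_mulVec] at hv
      have hv₀ := hA _ (fun i hi => Set.indicator_of_notMem hi v) hv
      refine sum_eq_zero fun i _ => ?_
      by_cases hi : i ∈ S
      · simpa [hi] using Or.inr (congrFun hv₀ i)
      · simp [hi]
  refine ⟨ω, fun i hi => ?_⟩
  rw [vecMul_mul_diagonal_indicator] at hω
  simpa [mulVec_transpose, hi] using congrFun hω i

theorem exists_mulVec_eq_of_forall_dotProduct_eq_zero {g : ι → K}
    (h : ∀ δ, (∀ i ∈ S, (Aᵀ *ᵥ δ) i = 0) → g ⬝ᵥ Aᵀ *ᵥ δ = 0) :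
    ∃ c, (∀ i ∉ S, c i = 0) ∧ A *ᵥ c = A *ᵥ g := by
  classical
  obtain ⟨c, hc⟩ := exists_vecMul_eq_of_forall_mulVec_eq_zero
    (A * diagonal (S.indicator (1 : ι → K)))ᵀ (y := A *ᵥ g) fun δ hδ => by
      rw [mulVec_transpose, vecMul_mul_diagonal_indicator] at hδ
      rw [← vecMul_transpose, ← dotProduct_mulVec]
      refine h δ fun i hi => ?_
      simpa [mulVec_transpose, hi] using congrFun hδ i
  refine ⟨S.indicator c, fun i hi => Set.indicator_of_notMem hi c, ?_⟩
  rw [← mul_diagonal_indicator_mulVec, ← vecMul_transpose, hc]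

end Matrix

theorem dotProduct_lt_sum_abs {d x : ι → ℝ} (hd : ∀ i, |d i| ≤ 1) {i₀ : ι}
    (hd₀ : |d i₀| < 1) (hx₀ : x i₀ ≠ 0) : d ⬝ᵥ x < ∑ i, |x i| := by
  refine sum_lt_sum (fun i _ => ?_) ⟨i₀, mem_univ _, ?_⟩
  · calc d i * x i ≤ |d i| * |x i| := abs_mul (d i) (x i) ▸ le_abs_self _
      _ ≤ |x i| := mul_le_of_le_one_left (abs_nonneg _) (hd i)
  · calc d i₀ * x i₀ ≤ |d i₀| * |x i₀| := abs_mul (d i₀) (x i₀) ▸ le_abs_self _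
      _ < |x i₀| := mul_lt_of_lt_one_left (abs_pos.2 hx₀) hd₀

section Box

variable {S : Set ι} {g : ι → ℝ} {u : ℝ}

theorem eq_zero_of_forall_dotProduct_lt (h : ∀ y, (∀ i ∉ S, |y i| < 1) → g ⬝ᵥ y < u) :
    ∀ i ∈ S, g i = 0 := by
  classical
  refine fun i hi => eq_zero_of_forall_mul_le (c := u) fun t => ?_
  have := h (Pi.single i t) fun j hj => by simp [(ne_of_mem_of_not_mem hi hj).symm]
  rw [dotProduct_single] at this
  linarith

theorem sum_abs_le_of_forall_dotProduct_lt (h : ∀ y, (∀ i ∉ S, |y i| < 1) → g ⬝ᵥ y < u) :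
    ∑ i, |g i| ≤ u := by
  refine not_lt.1 fun hlt => ?_
  have hu : 0 < u := by simpa using h 0 (by simp)
  have hpos : 0 < ∑ i, |g i| := hu.trans hlt
  set r := u / ∑ i, |g i|
  have hr : 0 ≤ r ∧ r < 1 := ⟨by positivity, (div_lt_one hpos).2 hlt⟩
  have hlt' := h (fun i => r * Real.sign (g i)) fun i _ => by
    rw [abs_mul, abs_of_nonneg hr.1]
    nlinarith [Real.abs_sign_le_one (g i)]
  have hval : g ⬝ᵥ (fun i => r * Real.sign (g i)) = u := by
    simp only [dotProduct, mul_left_comm _ r, ← mul_sum, mul_comm (g _),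
      Real.sign_mul_self_eq_abs]
    exact div_mul_cancel₀ _ hpos.ne'
  linarith

theorem exists_separating_of_not_exists_certificate [Fintype κ] (A : Matrix κ ι ℝ)
    {s : ι → ℝ} (h : ¬∃ ω, (∀ i ∈ S, (Aᵀ *ᵥ ω) i = s i) ∧ ∀ i ∉ S, |(Aᵀ *ᵥ ω) i| < 1) :
    ∃ (g : ι → ℝ) (u : ℝ), (∀ y, (∀ i ∉ S, |y i| < 1) → g ⬝ᵥ y < u) ∧
      ∀ ω, (∀ i ∈ S, (Aᵀ *ᵥ ω) i = s i) → u ≤ g ⬝ᵥ Aᵀ *ᵥ ω := by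
  classical
  let box : Set (ι → ℝ) := Sᶜ.pi fun _ => Set.Ioo (-1) 1
  let certificates : Set (ι → ℝ) := S.pi (fun i => {s i}) ∩ LinearMap.range Aᵀ.mulVecLin
  have hbox_open : IsOpen box := isOpen_set_pi (Set.toFinite _) fun _ _ => isOpen_Ioo
  have hbox_convex : Convex ℝ box := convex_pi fun _ _ => convex_Ioo _ _
  have hcert_convex : Convex ℝ certificates :=
    (convex_pi fun _ _ => convex_singleton _).inter (Submodule.convex _)
  have hdisj : Disjoint box certificates := by
    rw [Set.disjoint_left]
    rintro _ hbox ⟨hS, ω, rfl⟩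
    exact h ⟨ω, hS, fun i hi => abs_lt.2 (hbox i hi)⟩
  obtain ⟨f, u, hf_box, hf_cert⟩ :=
    geometric_hahn_banach_open hbox_convex hbox_open hcert_convex hdisj
  obtain ⟨g, hg⟩ := (dotProductEquiv ℝ ι).surjective f.toLinearMap
  have hfg : ∀ y, f y = g ⬝ᵥ y := fun y => (LinearMap.congr_fun hg y).symm
  refine ⟨g, u, fun y hy => ?_, fun ω hω => ?_⟩
  · exact hfg y ▸ hf_box y fun i hi => abs_lt.1 (hy i hi)
  · exact hfg _ ▸ hf_cert _ ⟨hω, ω, rfl⟩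

end Box

noncomputable def l1DirDeriv (xs v : ι → ℝ) : ℝ :=
  ∑ i, if xs i = 0 then |v i| else Real.sign (xs i) * v i

theorem exists_pos_sum_abs_add_smul_eq (xs v : ι → ℝ) :
    ∃ t > 0, ∑ i, |(xs + t • v) i| = ∑ i, |xs i| + t * l1DirDeriv xs v := by
  have hsmall : ∀ᶠ t in 𝓝[>] (0 : ℝ), ∀ i, xs i ≠ 0 → |t * v i| ≤ |xs i| := by
    refine eventually_all.2 fun i => ?_
    by_cases hi : xs i = 0
    · simp [hi]
    have hlim : Tendsto (fun t : ℝ => |t * v i|) (𝓝 0) (𝓝 0) := by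
      simpa using ((continuous_id.mul continuous_const).abs.tendsto 0 :
        Tendsto (fun t : ℝ => |t * v i|) _ _)
    exact nhdsWithin_le_nhds ((hlim.eventually (ge_mem_nhds (abs_pos.2 hi))).mono
      fun t ht _ => ht)
  obtain ⟨t, hsmall, ht⟩ := (hsmall.and self_mem_nhdsWithin).exists
  refine ⟨t, ht, ?_⟩
  rw [l1DirDeriv, mul_sum, ← sum_add_distrib]
  refine sum_congr rfl fun i _ => ?_
  simp only [Pi.add_apply, Pi.smul_apply, smul_eq_mul]
  split_ifs with hi
  · rw [hi, zero_add, abs_zero, zero_add, abs_mul, abs_of_pos ht]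
  · rw [Real.abs_add_eq_of_abs_le hi (hsmall i hi)]; ring

theorem l1DirDeriv_neg {xs v : ι → ℝ} (hv : ∀ i, xs i = 0 → v i = 0) :
    l1DirDeriv xs (-v) = -l1DirDeriv xs v := by
  rw [l1DirDeriv, l1DirDeriv, ← sum_neg_distrib]
  refine sum_congr rfl fun i _ => ?_
  split_ifs with hi
  · simp [hv i hi]
  · simp

section Uniqueness

variable {A : Matrix κ ι ℝ} {xs : ι → ℝ}

theorem l1DirDeriv_pos_of_unique
    (hu : ∀ x, A *ᵥ x = A *ᵥ xs → x ≠ xs → ∑ i, |xs i| < ∑ i, |x i|)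
    {v : ι → ℝ} (hv : A *ᵥ v = 0) (hv₀ : v ≠ 0) : 0 < l1DirDeriv xs v := by
  obtain ⟨t, ht, hsum⟩ := exists_pos_sum_abs_add_smul_eq xs v
  have hx : A *ᵥ (xs + t • v) = A *ᵥ xs := by
    rw [mulVec_add, mulVec_smul, hv, smul_zero, add_zero]
  have hne : xs + t • v ≠ xs := by simpa [ht.ne'] using hv₀
  have := hu _ hx hne
  rw [hsum] at this
  exact pos_of_mul_pos_right (by linarith) ht.le

theorem eq_zero_of_unique
    (hu : ∀ x, A *ᵥ x = A *ᵥ xs → x ≠ xs → ∑ i, |xs i| < ∑ i, |x i|)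
    {v : ι → ℝ} (hvS : ∀ i, xs i = 0 → v i = 0) (hv : A *ᵥ v = 0) : v = 0 := by
  by_contra hv₀
  have hpos := l1DirDeriv_pos_of_unique hu hv hv₀
  have hneg := l1DirDeriv_pos_of_unique hu (by rw [mulVec_neg, hv, neg_zero]) (neg_ne_zero.2 hv₀)
  rw [l1DirDeriv_neg hvS] at hneg
  linarith

variable [Fintype κ]

theorem sum_abs_lt_of_certificate
    (hker : ∀ v, (∀ i, xs i = 0 → v i = 0) → A *ᵥ v = 0 → v = 0) {ω : κ → ℝ}
    (hsign : ∀ i, xs i ≠ 0 → (Aᵀ *ᵥ ω) i = Real.sign (xs i))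
    (hlt : ∀ i, xs i = 0 → |(Aᵀ *ᵥ ω) i| < 1)
    {x : ι → ℝ} (hx : A *ᵥ x = A *ᵥ xs) (hne : x ≠ xs) : ∑ i, |xs i| < ∑ i, |x i| := by
  obtain ⟨i₀, hxs₀, hx₀⟩ : ∃ i, xs i = 0 ∧ x i ≠ 0 := by
    by_contra! h
    refine hne (sub_eq_zero.1 (hker _ (fun i hi => ?_) (by rw [mulVec_sub, hx, sub_self])))
    simp [h i hi, hi]
  have hd : ∀ i, |(Aᵀ *ᵥ ω) i| ≤ 1 := fun i => by
    by_cases hi : xs i = 0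
    · exact (hlt i hi).le
    · exact hsign i hi ▸ Real.abs_sign_le_one _
  calc ∑ i, |xs i| = (Aᵀ *ᵥ ω) ⬝ᵥ xs := by
        refine sum_congr rfl fun i _ => ?_
        by_cases hi : xs i = 0
        · simp [hi]
        · rw [hsign i hi, Real.sign_mul_self_eq_abs]
    _ = (Aᵀ *ᵥ ω) ⬝ᵥ x := by
        rw [mulVec_transpose, ← dotProduct_mulVec, ← dotProduct_mulVec, hx]
    _ < ∑ i, |x i| := dotProduct_lt_sum_abs hd (hlt i₀ hxs₀) hx₀

theorem exists_strict_certificate {ω₀ : κ → ℝ}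
    (hω₀ : ∀ i, xs i ≠ 0 → (Aᵀ *ᵥ ω₀) i = Real.sign (xs i))
    (hpos : ∀ v, A *ᵥ v = 0 → v ≠ 0 → 0 < l1DirDeriv xs v) :
    ∃ ω, (∀ i, xs i ≠ 0 → (Aᵀ *ᵥ ω) i = Real.sign (xs i)) ∧
      ∀ i, xs i = 0 → |(Aᵀ *ᵥ ω) i| < 1 := by
  by_contra hno
  obtain ⟨g, u, hbox, hcert⟩ := exists_separating_of_not_exists_certificate A
    (S := support xs) (s := Real.sign ∘ xs) (by simpa using hno)
  have hu : 0 < u := by simpa using hbox 0 (by simp)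
  have hgS := eq_zero_of_forall_dotProduct_lt hbox
  have hgu := sum_abs_le_of_forall_dotProduct_lt hbox
  have hgω₀ := hcert ω₀ hω₀
  -- `ω ↦ g ⬝ᵥ Aᵀ *ᵥ ω` is bounded below on the line of exact certificates `ω₀ - t • δ`.
  obtain ⟨c, hcS, hc⟩ := exists_mulVec_eq_of_forall_dotProduct_eq_zero (A := A) (S := support xs)
    (g := g) fun δ hδ => by
      refine eq_zero_of_forall_mul_le (c := g ⬝ᵥ Aᵀ *ᵥ ω₀ - u) fun t => ?_
      have := hcert (ω₀ - t • δ) fun i hi => by simp [mulVec_sub, mulVec_smul, hδ i hi, hω₀ i hi]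
      rw [mulVec_sub, mulVec_smul, dotProduct_sub, dotProduct_smul, smul_eq_mul] at this
      linarith
  have hcω₀ : c ⬝ᵥ Real.sign ∘ xs = g ⬝ᵥ Aᵀ *ᵥ ω₀ := by
    rw [dotProduct_mulVec, vecMul_transpose, ← hc, ← vecMul_transpose, ← dotProduct_mulVec]
    refine sum_congr rfl fun i _ => ?_
    by_cases hi : xs i = 0
    · simp [hcS i (notMem_support.2 hi)]
    · simp [hω₀ i hi]
  have hderiv : l1DirDeriv xs (g - c) = ∑ i, |g i| - c ⬝ᵥ Real.sign ∘ xs := by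
    rw [l1DirDeriv, dotProduct, ← sum_sub_distrib]
    refine sum_congr rfl fun i _ => ?_
    split_ifs with hi
    · simp [hcS i (notMem_support.2 hi), hi]
    · simp [hgS i hi]; ring
  have hne : g - c ≠ 0 := by
    intro hgc
    have : c ⬝ᵥ Real.sign ∘ xs = 0 := sum_eq_zero fun i _ => by
      by_cases hi : xs i = 0
      · simp [hi]
      · simp [← sub_eq_zero.1 hgc, hgS i hi]
    linarith
  have := hpos (g - c) (by rw [mulVec_sub, hc, sub_self]) hne
  linarith

end Uniqueness

theorem l1_unique_solution_iff_general {m n : ℕ}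
    (A : Matrix (Fin m) (Fin n) ℝ) (b : Fin m → ℝ)
    (xs : Fin n → ℝ) (hxs : A.mulVec xs = b) :
    (∀ x : Fin n → ℝ, A.mulVec x = b → x ≠ xs → ∑ i, |xs i| < ∑ i, |x i|) ↔
    ((∀ v : Fin n → ℝ, (∀ i, xs i = 0 → v i = 0) → A.mulVec v = 0 → v = 0) ∧
      ∃ ω : Fin m → ℝ,
        (∀ i, xs i ≠ 0 → ∑ j, A j i * ω j = Real.sign (xs i)) ∧
        (∀ i, xs i = 0 → |∑ j, A j i * ω j| < 1)) := by
  subst hxs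
  constructor
  · intro hu
    have hker : ∀ v : Fin n → ℝ, (∀ i, xs i = 0 → v i = 0) → A *ᵥ v = 0 → v = 0 :=
      fun v => eq_zero_of_unique hu
    obtain ⟨ω₀, hω₀⟩ := exists_transpose_mulVec_eq_on (S := support xs)
      (fun v hv => hker v fun i hi => hv i (notMem_support.2 hi)) (Real.sign ∘ xs)
    exact ⟨hker, exists_strict_certificate hω₀ fun v => l1DirDeriv_pos_of_unique hu⟩
  · rintro ⟨hker, ω, hsign, hlt⟩ x hx hne
    exact sum_abs_lt_of_certificate hker hsign hlt hx hne

/-- Theorem 3.1: necessary and sufficient conditions for `xs` to be the unique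
solution of the L1-minimization problem `min ‖x‖₁ s.t. A x = b`.
Here `I = supp xs`; the condition `ker(A_I) = {0}` is expressed as: every vector
supported on `I` that lies in the kernel of `A` is zero; the dual-certificate
conditions are expressed coordinatewise over `I` and its complement. -/
theorem l1_unique_solution_iff {m n : ℕ} (hmn : m < n)
    (A : Matrix (Fin m) (Fin n) ℝ) (b : Fin m → ℝ)
    (xs : Fin n → ℝ) (hxs : A.mulVec xs = b) :
    (∀ x : Fin n → ℝ, A.mulVec x = b → x ≠ xs → ∑ i, |xs i| < ∑ i, |x i|) ↔
    ((∀ v : Fin n → ℝ, (∀ i, xs i = 0 → v i = 0) → A.mulVec v = 0 → v = 0) ∧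
      ∃ ω : Fin m → ℝ,
        (∀ i, xs i ≠ 0 → ∑ j, A j i * ω j = Real.sign (xs i)) ∧
        (∀ i, xs i = 0 → |∑ j, A j i * ω j| < 1)) :=
  l1_unique_solution_iff_general A b xs hxs
end

section
/- Let A be a real m × n matrix, b ∈ ℝ^m, and let x* ∈ ℝ^n satisfy A x* = b with support I = supp(x*). Suppose that the columns of A indexed by I are linearly independent (ker(A_I) = {0}) and that there exists ω ∈ ℝ^m such that A_Iᵀ ω = sign(x*)_I and ‖A_{Iᶜ}ᵀ ω‖_∞ < 1. Then x* is the unique minimizer of ‖x‖₁ over all x ∈ ℝ^n with A x = b; that is, for every x ≠ x* with A x = b one has ‖x‖₁ > ‖x*‖₁. -/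
/-- Sufficiency direction of Theorem 3.1: if the columns of `A` indexed by
`I = supp xs` are linearly independent and a dual certificate `ω` exists
(`A_Iᵀ ω = sign(xs)_I` and `‖A_{Iᶜ}ᵀ ω‖_∞ < 1`), then `xs` is the unique
minimizer of the L1 norm over `{x | A x = b}`. -/
theorem l1_unique_of_dual_certificate {m n : ℕ}
    (A : Matrix (Fin m) (Fin n) ℝ) (b : Fin m → ℝ)
    (xs : Fin n → ℝ) (hxs : A.mulVec xs = b)
    (hker : ∀ v : Fin n → ℝ, (∀ i, xs i = 0 → v i = 0) → A.mulVec v = 0 → v = 0)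
    (ω : Fin m → ℝ)
    (hsign : ∀ i, xs i ≠ 0 → ∑ j, A j i * ω j = Real.sign (xs i))
    (hstrict : ∀ i, xs i = 0 → |∑ j, A j i * ω j| < 1) :
    ∀ x : Fin n → ℝ, A.mulVec x = b → x ≠ xs → ∑ i, |xs i| < ∑ i, |x i| := by
  intro x hx hne
  set c : Fin n → ℝ := fun i => ∑ j, A j i * ω j with hc
  have hAh : A.mulVec (x - xs) = 0 := by
    simp [Matrix.mulVec_sub, hx, hxs]
  have hsum0 : ∑ i, c i * (x i - xs i) = 0 := by
    have h1 : ∑ i, c i * (x i - xs i)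
        = ∑ j, ω j * (A.mulVec (x - xs)) j := by
      simp only [hc, Matrix.mulVec, dotProduct, Pi.sub_apply,
        Finset.sum_mul, Finset.mul_sum]
      rw [Finset.sum_comm]
      apply Finset.sum_congr rfl
      intro i _
      apply Finset.sum_congr rfl
      intro j _
      ring
    rw [h1, hAh]
    simp
  -- pointwise inequality
  have hpt : ∀ i, |xs i| + c i * (x i - xs i) ≤ |x i| := by
    intro i
    by_cases h0 : xs i = 0
    · have hci : |c i| ≤ 1 := le_of_lt (hstrict i h0)
      have : c i * x i ≤ |c i| * |x i| := by
        calc c i * x i ≤ |c i * x i| := le_abs_self _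
          _ = |c i| * |x i| := abs_mul _ _
      have h2 : |c i| * |x i| ≤ 1 * |x i| :=
        mul_le_mul_of_nonneg_right hci (abs_nonneg _)
      simp only [h0, abs_zero, sub_zero, zero_add]
      linarith
    · have hcs : c i = Real.sign (xs i) := hsign i h0
      have habs : Real.sign (xs i) * xs i = |xs i| := by
        rcases lt_or_gt_of_ne h0 with h | h
        · rw [Real.sign_of_neg h, abs_of_neg h]; ring
        · rw [Real.sign_of_pos h, abs_of_pos h]; ring
      have hle : Real.sign (xs i) * x i ≤ |x i| := by
        have : |Real.sign (xs i) * x i| = |x i| := by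
          rw [abs_mul]
          rcases lt_or_gt_of_ne h0 with h | h
          · rw [Real.sign_of_neg h]; simp
          · rw [Real.sign_of_pos h]; simp
        calc Real.sign (xs i) * x i ≤ |Real.sign (xs i) * x i| := le_abs_self _
          _ = |x i| := this
      rw [hcs]
      nlinarith
  -- strict at some i0 with xs i0 = 0, x i0 ≠ 0
  have hex : ∃ i0, xs i0 = 0 ∧ x i0 ≠ 0 := by
    by_contra hcon
    push_neg at hcon
    have hv : x - xs = 0 := by
      apply hker
      · intro i hi
        simp [hcon i hi, hi]
      · exact hAh
    apply hne
    have := sub_eq_zero.mp hv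
    exact this
  obtain ⟨i0, hi0, hxi0⟩ := hex
  have hstrict0 : |xs i0| + c i0 * (x i0 - xs i0) < |x i0| := by
    have hci : |c i0| < 1 := hstrict i0 hi0
    have h1 : c i0 * x i0 ≤ |c i0| * |x i0| := by
      calc c i0 * x i0 ≤ |c i0 * x i0| := le_abs_self _
        _ = |c i0| * |x i0| := abs_mul _ _
    have h2 : |c i0| * |x i0| < 1 * |x i0| := by
      apply mul_lt_mul_of_pos_right hci
      exact abs_pos.mpr hxi0
    simp only [hi0, abs_zero, sub_zero, zero_add]
    linarith
  have key : ∑ i, (|xs i| + c i * (x i - xs i)) < ∑ i, |x i| := by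
    apply Finset.sum_lt_sum (fun i _ => hpt i)
    exact ⟨i0, Finset.mem_univ _, hstrict0⟩
  calc ∑ i, |xs i| = ∑ i, (|xs i| + c i * (x i - xs i)) := by
        rw [Finset.sum_add_distrib, hsum0, add_zero]
    _ < ∑ i, |x i| := key
end
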